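/- Let α > 0, let s ∈ ℂ with s² = −1 (i.e. s = i or s = −i), and define β(z) = ((z−α)/(z+α))^{1/4} using the principal branch of the complex power, and the 2×2 matrix function Ψ(z) = (1/2)·[[β(z)+β(z)⁻¹, −i s (β(z)−β(z)⁻¹)],[−i s (β(z)−β(z)⁻¹), β(z)+β(z)⁻¹]]. Then: (i) Ψ is analytic on ℂ∖[−α,α]; (ii) Ψ(z) → I as z → ∞; and (iii) for every x ∈ (−α,α), the boundary values Ψ₊(x) = lim_{ε→0⁺} Ψ(x+iε) and Ψ₋(x) = lim_{ε→0⁺} Ψ(x−iε) exist and satisfy Ψ₊(x) = Ψ₋(x)·[[0, s],[s, 0]]. That is, Ψ solves the Riemann–Hilbert problem with constant off-diagonal jump [[0,s],[s,0]] on [−α,α] and identity behaviour at infinity. -/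

import Mathlib

/-!
Write `Ψ = psiMatrix s ∘ β`, where `psiMatrix s b` is rational in `b` with a pole only at `b = 0`.
The Möbius map `z ↦ (z - α)/(z + α)` sends `ℂ ∖ [-α, α]` into the slit plane, so `β` is
analytic and nonzero there, and it tends to `1` at infinity, where `psiMatrix s 1 = 1`.
On `(-α, α)` the Möbius map is negative real and preserves the upper and lower half-planes,
so `β` has boundary values `β₊ = β(x)` (principal branch) and `β₋ = e^{-iπ/2} β(x)`; hence
`β₊ = i β₋`, and `psiMatrix s (i b) = psiMatrix s b * [[0, s], [s, 0]]` is an algebraic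
identity once `s² = -1`.
-/

open Complex Filter Topology

/-- `β(z) = ((z−α)/(z+α))^{1/4}`, principal branch of the complex power. -/
noncomputable def betaHM (α : ℝ) (z : ℂ) : ℂ :=
  ((z - (α : ℂ)) / (z + (α : ℂ))) ^ ((1 : ℂ) / 4)

/-- The outer parametrix
`Ψ(z) = (1/2)·[[β+β⁻¹, −is(β−β⁻¹)],[−is(β−β⁻¹), β+β⁻¹]]` for the Hastings–McLeod
Riemann–Hilbert problem. -/
noncomputable def PsiHMout (α : ℝ) (s : ℂ) (z : ℂ) : Matrix (Fin 2) (Fin 2) ℂ :=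
  ((1 : ℂ) / 2) •
    !![betaHM α z + (betaHM α z)⁻¹, -Complex.I * s * (betaHM α z - (betaHM α z)⁻¹);
       -Complex.I * s * (betaHM α z - (betaHM α z)⁻¹), betaHM α z + (betaHM α z)⁻¹]

open Real

namespace Complex

theorem tendsto_cpow_const_of_tendsto_log {ι : Type*} {l : Filter ι} {f : ι → ℂ} {L : ℂ}
    (hlog : Tendsto (fun i => log (f i)) l (𝓝 L)) (hf : ∀ᶠ i in l, f i ≠ 0) (c : ℂ) :
    Tendsto (fun i => f i ^ c) l (𝓝 (exp (L * c))) :=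
  ((continuous_exp.tendsto _).comp (hlog.mul_const c)).congr'
    (hf.mono fun _ hi => (cpow_def_of_ne_zero hi c).symm)

theorem continuousWithinAt_cpow_const_of_re_neg_of_im_zero {w : ℂ} (hre : w.re < 0)
    (him : w.im = 0) (c : ℂ) : ContinuousWithinAt (· ^ c) {z | 0 ≤ z.im} w := by
  have hw : w ≠ 0 := ne_of_apply_ne re (by simpa using hre.ne)
  simpa [ContinuousWithinAt, cpow_def_of_ne_zero hw] using tendsto_cpow_const_of_tendsto_log
    (continuousWithinAt_log_of_re_neg_of_im_zero hre him)
    (eventually_nhdsWithin_of_eventually_nhds (isOpen_ne.eventually_mem hw)) c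

theorem tendsto_cpow_const_nhdsWithin_im_neg_of_re_neg_of_im_zero {w : ℂ} (hre : w.re < 0)
    (him : w.im = 0) (c : ℂ) :
    Tendsto (· ^ c) (𝓝[{z | z.im < 0}] w) (𝓝 (exp ((Real.log ‖w‖ - π * I) * c))) :=
  tendsto_cpow_const_of_tendsto_log (tendsto_log_nhdsWithin_im_neg_of_re_neg_of_im_zero hre him)
    (eventually_nhdsWithin_of_eventually_nhds
      (isOpen_ne.eventually_mem (ne_of_apply_ne re (by simpa using hre.ne)))) c

theorem im_sub_div_add_ofReal (z : ℂ) (a : ℝ) :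
    ((z - a) / (z + a)).im = 2 * a * z.im / normSq (z + a) := by
  simp only [div_im, sub_im, add_im, ofReal_im, sub_re, add_re, ofReal_re, sub_zero, add_zero]
  ring

theorem sub_div_add_mem_slitPlane {α : ℝ} (hα : 0 ≤ α) {z : ℂ}
    (hz : z ∉ ((↑) : ℝ → ℂ) '' Set.Icc (-α) α) : (z - α) / (z + α) ∈ slitPlane := by
  by_contra hw
  obtain ⟨hre, him⟩ : ((z - α) / (z + α)).re ≤ 0 ∧ ((z - α) / (z + α)).im = 0 := by
    simpa [mem_slitPlane_iff] using hw
  set t := ((z - α) / (z + α)).re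
  by_cases hden : z + α = 0
  · exact hz ⟨-α, ⟨le_rfl, by linarith⟩, by push_cast; linear_combination -hden⟩
  have ht : (z - α) / (z + α) = t := ext rfl (by simpa using him)
  have h1t : (0 : ℝ) < 1 - t := by linarith
  rw [div_eq_iff hden] at ht
  -- invert the Möbius map: `z = α (1 + t) / (1 - t)`, which lies in `[-α, α]` for `t ≤ 0`
  refine hz ⟨α * (1 + t) / (1 - t), ⟨?_, ?_⟩, ?_⟩
  · rw [le_div_iff₀ h1t]; nlinarith
  · rw [div_le_iff₀ h1t]; nlinarith
  · have : (1 - t : ℂ) ≠ 0 := by exact_mod_cast h1t.ne'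
    push_cast
    rw [div_eq_iff this]
    linear_combination -ht

theorem tendsto_sub_div_add_cobounded (a b : ℂ) :
    Tendsto (fun z => (z - a) / (z + b)) (Bornology.cobounded ℂ) (𝓝 1) := by
  have hcont : ContinuousAt (fun u : ℂ => (1 - a * u) / (1 + b * u)) 0 := by
    fun_prop (disch := simp)
  have h := hcont.tendsto.comp tendsto_inv₀_cobounded
  simp only [mul_zero, sub_zero, add_zero, div_one] at h
  refine h.congr' ?_
  filter_upwards [Bornology.eventually_ne_cobounded 0] with z hz
  simp only [Function.comp_apply]
  field_simp

theorem tendsto_ofReal_add_mul_I_nhdsGT_zero (x : ℝ) :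
    Tendsto (fun ε : ℝ => (x : ℂ) + ε * I) (𝓝[>] 0) (𝓝[{z | 0 ≤ z.im}] x) := by
  refine tendsto_nhdsWithin_iff.2 ⟨?_, eventually_nhdsWithin_of_forall fun ε hε => ?_⟩
  · exact (Continuous.tendsto' (by fun_prop) 0 _ (by simp)).mono_left nhdsWithin_le_nhds
  · simpa using le_of_lt hε

theorem tendsto_ofReal_sub_mul_I_nhdsGT_zero (x : ℝ) :
    Tendsto (fun ε : ℝ => (x : ℂ) - ε * I) (𝓝[>] 0) (𝓝[{z | z.im < 0}] x) := by
  refine tendsto_nhdsWithin_iff.2 ⟨?_, eventually_nhdsWithin_of_forall fun ε hε => ?_⟩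
  · exact (Continuous.tendsto' (by fun_prop) 0 _ (by simp)).mono_left nhdsWithin_le_nhds
  · simpa using hε

end Complex

section betaHM

variable {α : ℝ}

theorem betaHM_ne_zero {z : ℂ} (hz : (z - α) / (z + α) ≠ 0) : betaHM α z ≠ 0 := by
  simp [betaHM, cpow_eq_zero_iff, hz]

theorem analyticAt_betaHM (hα : 0 ≤ α) {z : ℂ}
    (hz : z ∉ ((↑) : ℝ → ℂ) '' Set.Icc (-α) α) :
    AnalyticAt ℂ (betaHM α) z := by
  have hslit := sub_div_add_mem_slitPlane hα hz
  have hden : z + α ≠ 0 := fun h => slitPlane_ne_zero hslit (by simp [h])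
  exact ((analyticAt_id.sub analyticAt_const).div (analyticAt_id.add analyticAt_const) hden).cpow
    analyticAt_const hslit

theorem tendsto_betaHM_cobounded : Tendsto (betaHM α) (Bornology.cobounded ℂ) (𝓝 1) := by
  have h := (continuousAt_cpow_const (b := 1 / 4) one_mem_slitPlane).tendsto.comp
    (tendsto_sub_div_add_cobounded (α : ℂ) α)
  rwa [one_cpow] at h

variable {x : ℝ}

theorem sub_div_add_re_neg_im_zero_of_mem_Ioo (hx : x ∈ Set.Ioo (-α) α) :
    (((x : ℂ) - α) / (x + α)).re < 0 ∧ (((x : ℂ) - α) / (x + α)).im = 0 := by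
  have h : ((x : ℂ) - α) / (x + α) = ((x - α) / (x + α) : ℝ) := by push_cast; rfl
  rw [h, ofReal_re, ofReal_im]
  exact ⟨div_neg_of_neg_of_pos (by linarith [hx.2]) (by linarith [hx.1]), rfl⟩

theorem continuousAt_sub_div_add_of_mem_Ioo (hx : x ∈ Set.Ioo (-α) α) :
    ContinuousAt (fun z : ℂ => (z - α) / (z + α)) x :=
  (continuousAt_id.sub continuousAt_const).div (continuousAt_id.add continuousAt_const)
    (by exact_mod_cast (by linarith [hx.1] : x + α ≠ 0))

theorem continuousWithinAt_betaHM_im_nonneg (hx : x ∈ Set.Ioo (-α) α) :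
    ContinuousWithinAt (betaHM α) {z | 0 ≤ z.im} x := by
  have hα : 0 ≤ α := by linarith [hx.1, hx.2]
  have hmaps :
      Set.MapsTo (fun z : ℂ => (z - α) / (z + α)) {z | 0 ≤ z.im} {w | 0 ≤ w.im} := by
    intro z hz
    simp only [Set.mem_ofPred_eq, im_sub_div_add_ofReal] at hz ⊢
    exact div_nonneg (by nlinarith) (normSq_nonneg _)
  obtain ⟨hre, him⟩ := sub_div_add_re_neg_im_zero_of_mem_Ioo hx
  exact (continuousWithinAt_cpow_const_of_re_neg_of_im_zero hre him _).comp
    (f := fun z : ℂ => (z - α) / (z + α))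
    (continuousAt_sub_div_add_of_mem_Ioo hx).continuousWithinAt hmaps

theorem tendsto_betaHM_nhdsWithin_im_neg (hx : x ∈ Set.Ioo (-α) α) :
    Tendsto (betaHM α) (𝓝[{z | z.im < 0}] x) (𝓝 (-I * betaHM α x)) := by
  have hα : 0 < α := by linarith [hx.1, hx.2]
  have hmaps : Set.MapsTo (fun z : ℂ => (z - α) / (z + α)) {z | z.im < 0} {w | w.im < 0} := by
    intro z hz
    simp only [Set.mem_ofPred_eq, im_sub_div_add_ofReal] at hz ⊢
    have hden : z + α ≠ 0 := fun h => hz.ne (by simpa using congrArg im h)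
    exact div_neg_of_neg_of_pos (by nlinarith) (normSq_pos.2 hden)
  obtain ⟨hre, him⟩ := sub_div_add_re_neg_im_zero_of_mem_Ioo hx
  have hlim : Tendsto (betaHM α) _ _ :=
    (tendsto_cpow_const_nhdsWithin_im_neg_of_re_neg_of_im_zero hre him (1 / 4)).comp
      ((continuousAt_sub_div_add_of_mem_Ioo hx).continuousWithinAt.tendsto_nhdsWithin hmaps)
  convert hlim using 2
  have hw : ((x : ℂ) - α) / (x + α) ≠ 0 := fun h => by simp [h] at hre
  rw [betaHM, cpow_def_of_ne_zero hw, Complex.log, arg_eq_pi_iff.2 ⟨hre, him⟩,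
    ← exp_neg_pi_div_two_mul_I, ← Complex.exp_add]
  ring_nf

end betaHM

/-- `PsiHMout α s z` is `psiMatrix s (betaHM α z)` by definition. -/
noncomputable def psiMatrix (s b : ℂ) : Matrix (Fin 2) (Fin 2) ℂ :=
  ((1 : ℂ) / 2) • !![b + b⁻¹, -I * s * (b - b⁻¹); -I * s * (b - b⁻¹), b + b⁻¹]

section psiMatrix

variable (s : ℂ)

theorem analyticAt_psiMatrix_apply {b : ℂ} (hb : b ≠ 0) (p q : Fin 2) :
    AnalyticAt ℂ (fun b => psiMatrix s b p q) b := by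
  fin_cases p <;> fin_cases q <;> simp [psiMatrix] <;> fun_prop (disch := exact hb)

theorem continuousAt_psiMatrix {b : ℂ} (hb : b ≠ 0) : ContinuousAt (psiMatrix s) b :=
  continuousAt_pi.2 fun p => continuousAt_pi.2 fun q =>
    (analyticAt_psiMatrix_apply s hb p q).continuousAt

@[simp]
theorem psiMatrix_one : psiMatrix s 1 = 1 := by
  ext p q
  fin_cases p <;> fin_cases q <;> norm_num [psiMatrix]

theorem psiMatrix_I_mul {s : ℂ} (hs : s ^ 2 = -1) (b : ℂ) :
    psiMatrix s (I * b) = psiMatrix s b * !![0, s; s, 0] := by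
  ext p q
  fin_cases p <;> fin_cases q <;> simp [psiMatrix, Matrix.mul_apply, mul_inv_rev]
  · linear_combination I * (b - b⁻¹) / 2 * hs
  · linear_combination -(s * (b + b⁻¹)) / 2 * I_sq
  · linear_combination -(s * (b + b⁻¹)) / 2 * I_sq
  · linear_combination I * (b - b⁻¹) / 2 * hs

end psiMatrix

/-- **The outer parametrix solves the Riemann–Hilbert problem with constant
off-diagonal jump `[[0,s],[s,0]]` on `[−α,α]` and identity at infinity:**
for `α > 0` and `s² = −1`, (i) `Ψ` is analytic on `ℂ∖[−α,α]`; (ii) `Ψ(z) → I` as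
`z → ∞`; (iii) for every `x ∈ (−α,α)` the boundary values `Ψ₊(x), Ψ₋(x)` from above
and below exist and satisfy `Ψ₊(x) = Ψ₋(x)·[[0,s],[s,0]]`. -/
theorem PsiHMout_RHP (α : ℝ) (hα : 0 < α) (s : ℂ) (hs : s ^ 2 = -1) :
    (∀ p q : Fin 2, AnalyticOnNhd ℂ (fun z => PsiHMout α s z p q)
      ((fun t : ℝ => (t : ℂ)) '' Set.Icc (-α) α)ᶜ) ∧
    Tendsto (PsiHMout α s) (Bornology.cobounded ℂ) (nhds 1) ∧
    (∀ x ∈ Set.Ioo (-α) α, ∃ Pp Pm : Matrix (Fin 2) (Fin 2) ℂ,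
      Tendsto (fun ε : ℝ => PsiHMout α s ((x : ℂ) + ε * Complex.I))
        (nhdsWithin 0 (Set.Ioi 0)) (nhds Pp) ∧
      Tendsto (fun ε : ℝ => PsiHMout α s ((x : ℂ) - ε * Complex.I))
        (nhdsWithin 0 (Set.Ioi 0)) (nhds Pm) ∧
      Pp = Pm * !![0, s; s, 0]) := by
  refine ⟨fun p q z hz => ?_, ?_, fun x hx => ?_⟩
  · have hslit := sub_div_add_mem_slitPlane hα.le hz
    exact (analyticAt_psiMatrix_apply s (betaHM_ne_zero (slitPlane_ne_zero hslit)) p q).comp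
      (analyticAt_betaHM hα.le hz)
  · have h :=
      (continuousAt_psiMatrix s one_ne_zero).tendsto.comp (tendsto_betaHM_cobounded (α := α))
    rwa [psiMatrix_one] at h
  · obtain ⟨hre, -⟩ := sub_div_add_re_neg_im_zero_of_mem_Ioo hx
    have hβ : betaHM α x ≠ 0 := betaHM_ne_zero fun h => by simp [h] at hre
    refine ⟨psiMatrix s (betaHM α x), psiMatrix s (-I * betaHM α x), ?_, ?_, ?_⟩
    · exact (continuousAt_psiMatrix s hβ).tendsto.comp
        ((continuousWithinAt_betaHM_im_nonneg hx).tendsto.comp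
          (tendsto_ofReal_add_mul_I_nhdsGT_zero x))
    · exact (continuousAt_psiMatrix s (by simpa using hβ)).tendsto.comp
        ((tendsto_betaHM_nhdsWithin_im_neg hx).comp (tendsto_ofReal_sub_mul_I_nhdsGT_zero x))
    · simpa [← mul_assoc] using psiMatrix_I_mul hs (-I * betaHM α x)
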